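/- arXiv:2506.04124 — 5 statements merged into one kernel-verified Lean document; each statement's English description precedes it below -/
import Mathlib

section
/- Let $C\geq 1$, $0<p\leq 1$, and let $\mu$ be a probability measure on ${\rm Mat}_m(\mathbb{R})$ with $\int\|g\|^p\,d\mu\leq C$ and $\sup_{\|v\|=1}\int\|gv\|^{-p}\,d\mu\leq C$. Then for every unit vector $v$ and every $T>0$, $\int_{\mathscr{B}_T(\hat v)} |\log\|gv\||\,d\mu(g) \leq \frac{3C}{p}e^{-pT/2}$, where $\mathscr{B}_T(\hat v)=\{g:\log\|gv\|<-T\text{ or }\log\|g\|>T\}$. -/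
/-
Pointwise bound instead of Cauchy–Schwarz. With `q = p / 2`, the inequality `log y ≤ y / e`
gives `|log x| ≤ max (x ^ q) (x ^ (-q)) / (q e)`. For `x = ‖g v‖ ≤ N = ‖g‖` and `g ∈ 𝓑_T(v̂)`
the larger of `N ^ q` and `x ^ (-q)` exceeds `e ^ (q T)`, so that maximum is at most
`(N ^ p + x ^ (-p)) e ^ (-q T)`. Integrating against the two moment bounds gives
`4C / (e p) · e ^ (-p T / 2)`, and `4 / e ≤ 3`.
-/

open MeasureTheory ENNReal Classical

noncomputable section

abbrev Mat (m : ℕ) := EuclideanSpace ℝ (Fin m) →L[ℝ] EuclideanSpace ℝ (Fin m)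

instance (m : ℕ) : MeasurableSpace (Mat m) := borel _
instance (m : ℕ) : BorelSpace (Mat m) := ⟨rfl⟩

namespace Real

theorem log_le_div_exp_one {y : ℝ} (hy : 0 < y) : log y ≤ y / exp 1 := by
  have h := log_le_sub_one_of_pos (div_pos hy (exp_pos 1))
  rw [log_div hy.ne' (exp_pos 1).ne', log_exp] at h
  linarith

theorem log_le_rpow_div_mul_exp_one {x q : ℝ} (hx : 0 < x) (hq : 0 < q) :
    log x ≤ x ^ q / (q * exp 1) := by
  have h := log_le_div_exp_one (rpow_pos_of_pos hx q)
  rw [log_rpow hx] at h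
  rw [div_mul_eq_div_div_swap, le_div_iff₀ hq]
  linarith

theorem abs_log_le_max_rpow_div {x q : ℝ} (hx : 0 < x) (hq : 0 < q) :
    |log x| ≤ max (x ^ q) (x ^ (-q)) / (q * exp 1) := by
  have hpos := log_le_rpow_div_mul_exp_one hx hq
  have hneg := log_le_rpow_div_mul_exp_one (inv_pos.2 hx) hq
  rw [log_inv, inv_rpow hx.le, ← rpow_neg hx.le] at hneg
  rw [abs_le]
  constructor
  · refine (neg_le.1 hneg).trans' (neg_le_neg ?_)
    gcongr; exact le_max_right _ _
  · exact hpos.trans (by gcongr; exact le_max_left _ _)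

end Real

theorem max_le_sq_add_sq_div {a b s : ℝ} (hs : 0 < s) (h : s ≤ max a b) :
    max a b ≤ (a ^ 2 + b ^ 2) / s := by
  rw [le_div_iff₀ hs]
  rcases le_total a b with hab | hab
  · rw [max_eq_right hab] at h ⊢; nlinarith
  · rw [max_eq_left hab] at h ⊢; nlinarith

open Real in
theorem abs_log_le_of_lt_exp_neg_or_exp_lt {p T x N : ℝ} (hp : 0 < p) (hx : 0 < x)
    (hxN : x ≤ N) (hB : x < exp (-T) ∨ exp T < N) :
    |log x| ≤ 2 / (p * exp 1) * exp (-(p * T) / 2) * (N ^ p + x ^ (-p)) := by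
  have hq : 0 < p / 2 := half_pos hp
  have hN : 0 < N := hx.trans_le hxN
  have hmax : exp (p / 2 * T) ≤ max (N ^ (p / 2)) (x ^ (-(p / 2))) := by
    rcases hB with h | h
    · refine le_max_of_le_right ?_
      rw [show p / 2 * T = -T * -(p / 2) by ring, exp_mul]
      exact rpow_le_rpow_of_nonpos hx h.le (neg_nonpos.2 hq.le)
    · refine le_max_of_le_left ?_
      rw [mul_comm, exp_mul]
      exact rpow_le_rpow (exp_pos T).le h.le hq.le
  have hsq : ∀ y : ℝ, 0 < y → ∀ r : ℝ, (y ^ (r / 2)) ^ 2 = y ^ r := fun y hy r => by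
    rw [← Real.rpow_natCast, ← rpow_mul hy.le]; norm_num
  calc |log x| ≤ max (x ^ (p / 2)) (x ^ (-(p / 2))) / (p / 2 * exp 1) :=
        abs_log_le_max_rpow_div hx hq
    _ ≤ max (N ^ (p / 2)) (x ^ (-(p / 2))) / (p / 2 * exp 1) := by
        gcongr
    _ ≤ (N ^ p + x ^ (-p)) / exp (p / 2 * T) / (p / 2 * exp 1) := by
        gcongr
        rw [← hsq N hN p, ← hsq x hx (-p), neg_div]
        exact max_le_sq_add_sq_div (exp_pos _) hmax
    _ = 2 / (p * exp 1) * exp (-(p * T) / 2) * (N ^ p + x ^ (-p)) := by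
        rw [show -(p * T) / 2 = -(p / 2 * T) by ring, exp_neg]
        field_simp

open Real in
theorem ite_abs_log_norm_le {F : Type*} [NormedAddCommGroup F] [DecidableEq F] {p T : ℝ}
    (hp : 0 < p) {y : F} {N : NNReal} (hyN : ‖y‖₊ ≤ N) (hB : ‖y‖ < exp (-T) ∨ exp T < N) :
    (if y = 0 then ⊤ else ENNReal.ofReal |log ‖y‖|) ≤
      ENNReal.ofReal (2 / (p * exp 1) * exp (-(p * T) / 2)) *
        ((N : ℝ≥0∞) ^ p + (‖y‖₊ : ℝ≥0∞) ^ (-p)) := by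
  have hk : 0 < 2 / (p * exp 1) * exp (-(p * T) / 2) := by positivity
  split_ifs with hy
  · rw [hy, nnnorm_zero, ENNReal.coe_zero, ENNReal.zero_rpow_of_neg (neg_neg_iff_pos.2 hp),
      add_top, mul_top (ofReal_pos.2 hk).ne']
  have hx : 0 < ‖y‖ := norm_pos_iff.2 hy
  have hN : 0 < (N : ℝ) := hx.trans_le hyN
  calc ENNReal.ofReal |log ‖y‖|
      ≤ ENNReal.ofReal (2 / (p * exp 1) * exp (-(p * T) / 2) * (N ^ p + ‖y‖ ^ (-p))) :=
        ofReal_le_ofReal (abs_log_le_of_lt_exp_neg_or_exp_lt hp hx hyN hB)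
    _ = _ := by
        rw [ENNReal.ofReal_mul hk.le, ENNReal.ofReal_add (by positivity) (by positivity),
          ← ENNReal.ofReal_rpow_of_pos hN, ← ENNReal.ofReal_rpow_of_pos hx, ofReal_coe_nnreal,
          ← coe_nnnorm, ofReal_coe_nnreal]

section Operators

variable {E F : Type*} [NormedAddCommGroup E] [NormedSpace ℝ E] [NormedAddCommGroup F]
  [NormedSpace ℝ F] [MeasurableSpace (E →L[ℝ] F)] [OpensMeasurableSpace (E →L[ℝ] F)]

/-- The set `𝓑_T(v̂)` of the paper. -/
def badSet (v : E) (T : ℝ) : Set (E →L[ℝ] F) :=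
  {g | ‖g v‖ < Real.exp (-T) ∨ Real.exp T < ‖g‖}

theorem measurableSet_badSet (v : E) (T : ℝ) : MeasurableSet (badSet (F := F) v T) := by
  have happly : Continuous fun g : E →L[ℝ] F => g v := continuous_id.clm_apply continuous_const
  exact (measurableSet_lt happly.norm.measurable measurable_const).union
    (measurableSet_lt measurable_const continuous_norm.measurable)

open Real in
theorem setLIntegral_badSet_le [DecidableEq F] (μ : Measure (E →L[ℝ] F)) {p : ℝ} (hp : 0 < p)
    {v : E} (hv : ‖v‖ ≤ 1) (T : ℝ) :
    ∫⁻ g in badSet v T, (if g v = 0 then ⊤ else ENNReal.ofReal |log ‖g v‖|) ∂μ ≤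
      ENNReal.ofReal (2 / (p * exp 1) * exp (-(p * T) / 2)) *
        (∫⁻ g, (‖g‖₊ : ℝ≥0∞) ^ p ∂μ + ∫⁻ g, (‖g v‖₊ : ℝ≥0∞) ^ (-p) ∂μ) := by
  have hnorm : Measurable fun g : E →L[ℝ] F => (‖g‖₊ : ℝ≥0∞) ^ p :=
    measurable_nnnorm.coe_nnreal_ennreal.pow_const p
  have hle : ∀ g : E →L[ℝ] F, ‖g v‖₊ ≤ ‖g‖₊ := fun g =>
    (g.le_opNNNorm v).trans (mul_le_of_le_one_right (by positivity) hv)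
  calc _ ≤ ∫⁻ g in badSet v T, ENNReal.ofReal (2 / (p * exp 1) * exp (-(p * T) / 2)) *
          ((‖g‖₊ : ℝ≥0∞) ^ p + (‖g v‖₊ : ℝ≥0∞) ^ (-p)) ∂μ :=
        setLIntegral_mono' (measurableSet_badSet v T) fun g hg =>
          ite_abs_log_norm_le hp (hle g) hg
    _ ≤ ∫⁻ g, ENNReal.ofReal (2 / (p * exp 1) * exp (-(p * T) / 2)) *
          ((‖g‖₊ : ℝ≥0∞) ^ p + (‖g v‖₊ : ℝ≥0∞) ^ (-p)) ∂μ := setLIntegral_le_lintegral _ _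
    _ = _ := by rw [lintegral_const_mul' _ _ ofReal_ne_top, lintegral_add_left hnorm]

end Operators

/-- `𝓑_T(v̂)` is written with `‖g v‖ < e ^ (-T)` so that it also contains the `g` with `g v = 0`,
where the integrand is `+∞`. -/
theorem integral_log_on_BT_le_general {m : ℕ} {p C : ℝ} (hp0 : 0 < p) (hC : 1 ≤ C)
    (μ : Measure (Mat m))
    (hbar : ∫⁻ g, (‖g‖₊ : ℝ≥0∞) ^ p ∂μ ≤ ENNReal.ofReal C)
    (hunder : ∀ v : EuclideanSpace ℝ (Fin m), ‖v‖ = 1 →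
      ∫⁻ g, (‖g v‖₊ : ℝ≥0∞) ^ (-p) ∂μ ≤ ENNReal.ofReal C)
    (v : EuclideanSpace ℝ (Fin m)) (hv : ‖v‖ = 1) (T : ℝ) :
    ∫⁻ g in {g : Mat m | ‖g v‖ < Real.exp (-T) ∨ Real.exp T < ‖g‖},
        (if g v = 0 then (⊤ : ℝ≥0∞) else ENNReal.ofReal |Real.log ‖g v‖|) ∂μ
      ≤ ENNReal.ofReal (3 * C / p * Real.exp (-(p * T) / 2)) := by
  have he : 4 / 3 ≤ Real.exp 1 := by linarith [Real.add_one_le_exp 1]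
  calc _ ≤ ENNReal.ofReal (2 / (p * Real.exp 1) * Real.exp (-(p * T) / 2)) *
          (ENNReal.ofReal C + ENNReal.ofReal C) :=
        (setLIntegral_badSet_le μ hp0 hv.le T).trans (by gcongr; exact hunder v hv)
    _ = ENNReal.ofReal (4 / Real.exp 1 * (C / p * Real.exp (-(p * T) / 2))) := by
        rw [← ENNReal.ofReal_add (by positivity) (by positivity),
          ← ENNReal.ofReal_mul (by positivity)]
        congr 1; field_simp; ring
    _ ≤ ENNReal.ofReal (3 * C / p * Real.exp (-(p * T) / 2)) := by
        rw [mul_div_assoc, mul_assoc]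
        gcongr
        rw [div_le_iff₀ (Real.exp_pos 1)]; linarith

/-- if `μ ∈ 𝓜^p_C`, then for every unit vector `v` and `T > 0`,
`∫_{𝓑_T(v̂)} |log ‖g v‖| dμ(g) ≤ (3C/p) e^{-pT/2}`, where
`𝓑_T(v̂) = {g : log ‖g v‖ < -T or log ‖g‖ > T}` (written via `‖g v‖ < e^{-T}` to also cover
`g v = 0`, in which case the integrand is interpreted as `+∞`). -/
theorem integral_log_on_BT_le {m : ℕ} {p C : ℝ} (hp0 : 0 < p) (hp1 : p ≤ 1) (hC : 1 ≤ C)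
    (μ : Measure (Mat m)) [IsProbabilityMeasure μ]
    (hbar : ∫⁻ g, (‖g‖₊ : ℝ≥0∞) ^ p ∂μ ≤ ENNReal.ofReal C)
    (hunder : ∀ v : EuclideanSpace ℝ (Fin m), ‖v‖ = 1 →
      ∫⁻ g, (‖g v‖₊ : ℝ≥0∞) ^ (-p) ∂μ ≤ ENNReal.ofReal C)
    (v : EuclideanSpace ℝ (Fin m)) (hv : ‖v‖ = 1) (T : ℝ) (hT : 0 < T) :
    ∫⁻ g in {g : Mat m | ‖g v‖ < Real.exp (-T) ∨ Real.exp T < ‖g‖},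
        (if g v = 0 then (⊤ : ℝ≥0∞) else ENNReal.ofReal |Real.log ‖g v‖|) ∂μ
      ≤ ENNReal.ofReal (3 * C / p * Real.exp (-(p * T) / 2)) :=
  integral_log_on_BT_le_general hp0 hC μ hbar hunder v hv T
end
end

section
/- Let $X$ be a finite-dimensional normed space, $0<p\leq 1$, $L,T<\infty$, and $\psi:X\to\mathbb{R}\cup\{-\infty\}$ measurable, continuous where finite, with $\mathscr{B}=\{|\psi|>T\}$ and $|\psi(x)-\psi(y)|\leq L\|x-y\|^p$ for $x,y\notin\mathscr{B}$. Then for any probability measures $\mu,\nu$ on $X$ with finite $p$-th moments, $\left|\int\psi\,d\mu-\int\psi\,d\nu\right| \leq L\,W_p(\mu,\nu) + \sqrt{\mu(\mathscr{B})}\,\|\psi\|_{L^2(\mu)} + \sqrt{\nu(\mathscr{B})}\,\|\psi\|_{L^2(\nu)} + T(\mu(\mathscr{B})+\nu(\mathscr{B}))$. -/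
open MeasureTheory ENNReal

noncomputable section

/-- The set of couplings between `μ` and `ν`. -/
def couplings {X : Type*} [MeasurableSpace X] (μ ν : Measure X) : Set (Measure (X × X)) :=
  {π | π.map Prod.fst = μ ∧ π.map Prod.snd = ν}

/-- The order-`p` Wasserstein distance, `0 < p ≤ 1`:
`W_p(μ,ν) = inf_{π ∈ Π(μ,ν)} ∬ ‖x-y‖^p dπ(x,y)`. -/
def Wp {X : Type*} [MeasurableSpace X] [NormedAddCommGroup X] (p : ℝ)
    (μ ν : Measure X) : ℝ≥0∞ :=
  ⨅ π ∈ couplings μ ν, ∫⁻ q : X × X, (ENNReal.ofReal ‖q.1 - q.2‖) ^ p ∂π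

/-!
Fix a coupling `π` of `μ` and `ν`; then `|∫ ψ dμ - ∫ ψ dν| ≤ ∫ |ψ x - ψ y| dπ`. Since `|ψ| ≤ T`
off `𝓑`, the integrand is bounded by `L ‖x - y‖ ^ p + g x + g y` with `g = 1_𝓑 (|ψ| + T)`, and
Cauchy–Schwarz on `𝓑` gives `∫ g dμ ≤ √(μ 𝓑) ‖ψ‖_{L²(μ)} + T μ 𝓑` for each marginal.
Taking the infimum over `π` produces `L W_p(μ, ν)`.
The Bochner integrals are junk when `ψ` is not integrable, but then `μ 𝓑 > 0` and
`‖ψ‖_{L²(μ)} = ∞` (as `ψ` is bounded off `𝓑`), so the right-hand side is infinite.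
-/

lemma EReal.abs_toReal_le_of_not_lt_or_lt {T : ℝ} {z : EReal}
    (hz : ¬((T : EReal) < z ∨ z < ((-T : ℝ) : EReal))) : |z.toReal| ≤ T := by
  push Not at hz
  obtain ⟨hle, hge⟩ := hz
  have hne_bot : z ≠ ⊥ := ne_bot_of_le_ne_bot (EReal.coe_ne_bot _) hge
  have hne_top : z ≠ ⊤ := ne_top_of_le_ne_top (EReal.coe_ne_top _) hle
  rw [abs_le]
  exact ⟨by simpa using EReal.toReal_le_toReal hge (EReal.coe_ne_bot _) hne_top,
    by simpa using EReal.toReal_le_toReal hle hne_bot (EReal.coe_ne_top _)⟩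

lemma ENNReal.ofReal_rpow_le {x : ℝ} (hx : 0 ≤ x) (p : ℝ) :
    ENNReal.ofReal (x ^ p) ≤ ENNReal.ofReal x ^ p := by
  rcases hx.lt_or_eq with hx | rfl
  · exact (ENNReal.ofReal_rpow_of_pos hx).ge
  rcases lt_trichotomy p 0 with hp | rfl | hp
  · simp [ENNReal.zero_rpow_of_neg hp]
  · simp
  · simp [Real.zero_rpow hp.ne', ENNReal.zero_rpow_of_pos hp]

section Pointwise

variable {X E : Type*} [NormedAddCommGroup E] {f : X → E} {S : Set X} {T : ℝ}

lemma enorm_le_ofReal_add_indicator (hT : ∀ y ∉ S, ‖f y‖ ≤ T) (y : X) :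
    ‖f y‖ₑ ≤ ENNReal.ofReal T + S.indicator (fun x => ‖f x‖ₑ + ENNReal.ofReal T) y := by
  by_cases hy : y ∈ S
  · rw [Set.indicator_of_mem hy]
    exact le_add_left le_self_add
  · rw [Set.indicator_of_notMem hy, add_zero, ← ofReal_norm]
    exact ENNReal.ofReal_le_ofReal (hT y hy)

lemma enorm_sub_le_indicator_add_indicator_of_mem (hT : ∀ y ∉ S, ‖f y‖ ≤ T) {x : X}
    (hx : x ∈ S) (y : X) :
    ‖f x - f y‖ₑ ≤ S.indicator (fun x => ‖f x‖ₑ + ENNReal.ofReal T) x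
      + S.indicator (fun x => ‖f x‖ₑ + ENNReal.ofReal T) y := by
  rw [Set.indicator_of_mem hx, add_assoc]
  exact enorm_sub_le.trans (add_le_add_right (enorm_le_ofReal_add_indicator hT y) _)

lemma enorm_sub_le_of_holder_off [SeminormedAddCommGroup X] {L p : ℝ}
    (hT : ∀ y ∉ S, ‖f y‖ ≤ T) (hH : ∀ x ∉ S, ∀ y ∉ S, ‖f x - f y‖ ≤ L * ‖x - y‖ ^ p) (x y : X) :
    ‖f x - f y‖ₑ ≤ ENNReal.ofReal L * ENNReal.ofReal ‖x - y‖ ^ p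
      + S.indicator (fun x => ‖f x‖ₑ + ENNReal.ofReal T) x
      + S.indicator (fun x => ‖f x‖ₑ + ENNReal.ofReal T) y := by
  rw [add_assoc]
  by_cases hx : x ∈ S
  · exact le_add_left (enorm_sub_le_indicator_add_indicator_of_mem hT hx y)
  by_cases hy : y ∈ S
  · rw [enorm_sub_rev, add_comm (S.indicator _ x)]
    exact le_add_left (enorm_sub_le_indicator_add_indicator_of_mem hT hy x)
  calc ‖f x - f y‖ₑ ≤ ENNReal.ofReal (L * ‖x - y‖ ^ p) := by
        rw [← ofReal_norm]
        exact ENNReal.ofReal_le_ofReal (hH x hx y hy)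
    _ ≤ ENNReal.ofReal L * ENNReal.ofReal ‖x - y‖ ^ p := by
        rw [ENNReal.ofReal_mul' (by positivity)]
        gcongr
        exact ENNReal.ofReal_rpow_le (norm_nonneg _) p
    _ ≤ _ := le_self_add

end Pointwise

section SmallSet

variable {X E : Type*} [MeasurableSpace X] [NormedAddCommGroup E] {μ : Measure X}
  {f : X → E} {S : Set X}

lemma setLIntegral_enorm_le_rpow_mul_eLpNorm (hf : AEStronglyMeasurable f μ) :
    ∫⁻ x in S, ‖f x‖ₑ ∂μ ≤ μ S ^ (1 / 2 : ℝ) * eLpNorm f 2 μ := by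
  calc ∫⁻ x in S, ‖f x‖ₑ ∂μ = eLpNorm f 1 (μ.restrict S) :=
        (eLpNorm_one_eq_lintegral_enorm (f := f)).symm
    _ ≤ eLpNorm f 2 (μ.restrict S) * μ.restrict S Set.univ ^ (1 / 2 : ℝ) := by
      convert eLpNorm_le_eLpNorm_mul_rpow_measure_univ one_le_two hf.restrict using 3
      norm_num
    _ ≤ μ S ^ (1 / 2 : ℝ) * eLpNorm f 2 μ := by
      rw [Measure.restrict_apply_univ, mul_comm]
      gcongr
      exact Measure.restrict_le_self

lemma lintegral_indicator_enorm_add_le (hf : AEStronglyMeasurable f μ) (hS : MeasurableSet S)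
    (T : ℝ) :
    ∫⁻ x, S.indicator (fun x => ‖f x‖ₑ + ENNReal.ofReal T) x ∂μ
      ≤ μ S ^ (1 / 2 : ℝ) * eLpNorm f 2 μ + ENNReal.ofReal T * μ S := by
  rw [lintegral_indicator hS, lintegral_add_right _ measurable_const, setLIntegral_const]
  gcongr
  exact setLIntegral_enorm_le_rpow_mul_eLpNorm hf

lemma integrable_or_rpow_mul_eLpNorm_eq_top [IsFiniteMeasure μ] {T : ℝ}
    (hf : AEStronglyMeasurable f μ) (hT : ∀ y ∉ S, ‖f y‖ ≤ T) :
    Integrable f μ ∨ μ S ^ (1 / 2 : ℝ) * eLpNorm f 2 μ = ∞ := by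
  by_cases hS : μ S = 0
  · exact .inl <| Integrable.of_bound hf T <|
      (measure_eq_zero_iff_ae_notMem.1 hS).mono fun y hy => hT y hy
  by_cases h2 : eLpNorm f 2 μ = ∞
  · exact .inr <| by
      rw [h2, ENNReal.mul_top (ENNReal.rpow_pos (pos_iff_ne_zero.2 hS) (measure_ne_top μ S)).ne']
  · exact .inl <| MemLp.integrable one_le_two ⟨hf, lt_top_iff_ne_top.2 h2⟩

end SmallSet

section Couplings

variable {X : Type*} [MeasurableSpace X]

lemma prod_mem_couplings (μ ν : Measure X) [IsProbabilityMeasure μ] [IsProbabilityMeasure ν] :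
    μ.prod ν ∈ couplings μ ν := by
  simp [couplings, Measure.map_fst_prod, Measure.map_snd_prod]

lemma enorm_integral_sub_le_of_coupling {E : Type*} [NormedAddCommGroup E] [NormedSpace ℝ E]
    {μ ν : Measure X} {π : Measure (X × X)} (hπ : π ∈ couplings μ ν) {f : X → E}
    (hμ : Integrable f μ) (hν : Integrable f ν)
    {c : X × X → ℝ≥0∞} {g : X → ℝ≥0∞} (hg : Measurable g)
    (hfc : ∀ x y, ‖f x - f y‖ₑ ≤ c (x, y) + g x + g y) :
    ‖∫ x, f x ∂μ - ∫ x, f x ∂ν‖ₑ ≤ ∫⁻ q, c q ∂π + ∫⁻ x, g x ∂μ + ∫⁻ x, g x ∂ν := by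
  obtain ⟨rfl, rfl⟩ := hπ
  have hfst : Integrable (fun q => f q.1) π := hμ.comp_measurable measurable_fst
  have hsnd : Integrable (fun q => f q.2) π := hν.comp_measurable measurable_snd
  rw [integral_map measurable_fst.aemeasurable hμ.aestronglyMeasurable,
    integral_map measurable_snd.aemeasurable hν.aestronglyMeasurable,
    lintegral_map hg measurable_fst, lintegral_map hg measurable_snd,
    ← lintegral_add_right _ (g := fun q : X × X => g q.1) (hg.comp measurable_fst),
    ← lintegral_add_right _ (g := fun q : X × X => g q.2) (hg.comp measurable_snd)]
  calc ‖∫ q, f q.1 ∂π - ∫ q, f q.2 ∂π‖ₑ = ‖∫ q, (f q.1 - f q.2) ∂π‖ₑ := by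
        rw [integral_sub hfst hsnd]
    _ ≤ ∫⁻ q, ‖f q.1 - f q.2‖ₑ ∂π := enorm_integral_le_lintegral_enorm _
    _ ≤ _ := lintegral_mono fun q => hfc q.1 q.2

end Couplings

section Wasserstein

variable {X : Type*} [MeasurableSpace X] [NormedAddCommGroup X]

lemma le_mul_Wp_add {p : ℝ} {μ ν : Measure X} [IsProbabilityMeasure μ] [IsProbabilityMeasure ν]
    {A a R : ℝ≥0∞} (ha : a ≠ ∞)
    (h : ∀ π ∈ couplings μ ν, A ≤ a * ∫⁻ q, ENNReal.ofReal ‖q.1 - q.2‖ ^ p ∂π + R) :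
    A ≤ a * Wp p μ ν + R := by
  have : Nonempty (couplings μ ν) := ⟨⟨_, prod_mem_couplings μ ν⟩⟩
  rw [Wp, iInf_subtype', ENNReal.mul_iInf' (fun h => absurd h ha) (fun _ => this),
    ENNReal.iInf_add]
  exact le_iInf fun π => h π π.2

theorem enorm_integral_sub_le_of_holder_off {E : Type*} [NormedAddCommGroup E]
    [NormedSpace ℝ E] {μ ν : Measure X}
    [IsProbabilityMeasure μ] [IsProbabilityMeasure ν] {f : X → E} (hf : StronglyMeasurable f)
    {S : Set X} (hS : MeasurableSet S) {L T p : ℝ} (hT : ∀ y ∉ S, ‖f y‖ ≤ T)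
    (hH : ∀ x ∉ S, ∀ y ∉ S, ‖f x - f y‖ ≤ L * ‖x - y‖ ^ p)
    (hμ : Integrable f μ) (hν : Integrable f ν) :
    ‖∫ x, f x ∂μ - ∫ x, f x ∂ν‖ₑ ≤ ENNReal.ofReal L * Wp p μ ν
      + ((μ S ^ (1 / 2 : ℝ) * eLpNorm f 2 μ + ENNReal.ofReal T * μ S)
        + (ν S ^ (1 / 2 : ℝ) * eLpNorm f 2 ν + ENNReal.ofReal T * ν S)) := by
  refine le_mul_Wp_add ENNReal.ofReal_ne_top fun π hπ => ?_
  have hg : Measurable (S.indicator fun x => ‖f x‖ₑ + ENNReal.ofReal T) :=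
    (hf.enorm.add_const _).indicator hS
  calc ‖∫ x, f x ∂μ - ∫ x, f x ∂ν‖ₑ
      ≤ ∫⁻ q, ENNReal.ofReal L * ENNReal.ofReal ‖q.1 - q.2‖ ^ p ∂π
        + ∫⁻ x, S.indicator (fun x => ‖f x‖ₑ + ENNReal.ofReal T) x ∂μ
        + ∫⁻ x, S.indicator (fun x => ‖f x‖ₑ + ENNReal.ofReal T) x ∂ν :=
        enorm_integral_sub_le_of_coupling hπ hμ hν hg (enorm_sub_le_of_holder_off hT hH)
    _ ≤ _ := by
        rw [lintegral_const_mul' _ _ ENNReal.ofReal_ne_top, add_assoc]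
        gcongr <;> exact lintegral_indicator_enorm_add_le hf.aestronglyMeasurable hS T

end Wasserstein

theorem integral_diff_le_of_holder_off_small_set_general
    {X : Type*} [NormedAddCommGroup X]
    [MeasurableSpace X]
    {L T p : ℝ}
    (ψ : X → EReal)
    (hψmeas : Measurable ψ)
    (𝓑 : Set X) (h𝓑 : 𝓑 = {x : X | (T : EReal) < ψ x ∨ ψ x < ((-T : ℝ) : EReal)})
    (hHolder : ∀ x ∉ 𝓑, ∀ y ∉ 𝓑, |(ψ x).toReal - (ψ y).toReal| ≤ L * ‖x - y‖ ^ p)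
    (μ ν : Measure X) [IsProbabilityMeasure μ] [IsProbabilityMeasure ν] :
    ENNReal.ofReal |(∫ x, (ψ x).toReal ∂μ) - ∫ x, (ψ x).toReal ∂ν|
      ≤ ENNReal.ofReal L * Wp p μ ν
        + (μ 𝓑) ^ (1 / 2 : ℝ) * eLpNorm (fun x => (ψ x).toReal) 2 μ
        + (ν 𝓑) ^ (1 / 2 : ℝ) * eLpNorm (fun x => (ψ x).toReal) 2 ν
        + ENNReal.ofReal T * (μ 𝓑 + ν 𝓑) := by
  have hf : StronglyMeasurable fun x => (ψ x).toReal := hψmeas.ereal_toReal.stronglyMeasurable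
  have h𝓑meas : MeasurableSet 𝓑 :=
    h𝓑 ▸ (hψmeas measurableSet_Ioi).union (hψmeas measurableSet_Iio)
  have hT : ∀ y ∉ 𝓑, ‖(ψ y).toReal‖ ≤ T := fun y hy =>
    EReal.abs_toReal_le_of_not_lt_or_lt (by simpa [h𝓑] using hy)
  obtain hμ | hμ := (integrable_or_rpow_mul_eLpNorm_eq_top (μ := μ) hf.aestronglyMeasurable hT).symm
  · rw [hμ]; simp
  obtain hν | hν := (integrable_or_rpow_mul_eLpNorm_eq_top (μ := ν) hf.aestronglyMeasurable hT).symm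
  · rw [hν]; simp
  rw [← Real.enorm_eq_ofReal_abs]
  refine (enorm_integral_sub_le_of_holder_off hf h𝓑meas hT hHolder hμ hν).trans_eq ?_
  ring

/-- for a measurable `ψ : X → ℝ ∪ {-∞}` (modelled as `EReal`, never `+∞`),
continuous where finite, with `𝓑 = {|ψ| > T}` and `ψ` being `p`-Hölder with constant `L`
off `𝓑`, and for any probability measures `μ, ν` with finite `p`-th moments:
`|∫ψ dμ - ∫ψ dν| ≤ L W_p(μ,ν) + √(μ𝓑) ‖ψ‖_{L²(μ)} + √(ν𝓑) ‖ψ‖_{L²(ν)} + T(μ𝓑 + ν𝓑)`.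
(Integrals of `ψ` are taken via `EReal.toReal`; the `L²` norms are the `eLpNorm`s.) -/
theorem integral_diff_le_of_holder_off_small_set
    {X : Type*} [NormedAddCommGroup X] [NormedSpace ℝ X]
    [FiniteDimensional ℝ X] [MeasurableSpace X] [BorelSpace X]
    {L T p : ℝ} (hp0 : 0 < p) (hp1 : p ≤ 1)
    (ψ : X → EReal) (hψtop : ∀ x, ψ x ≠ ⊤)
    (hψmeas : Measurable ψ)
    (hψcont : ∀ x, ψ x ≠ ⊥ → ContinuousAt ψ x)
    (𝓑 : Set X) (h𝓑 : 𝓑 = {x : X | (T : EReal) < ψ x ∨ ψ x < ((-T : ℝ) : EReal)})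
    (hHolder : ∀ x ∉ 𝓑, ∀ y ∉ 𝓑, |(ψ x).toReal - (ψ y).toReal| ≤ L * ‖x - y‖ ^ p)
    (μ ν : Measure X) [IsProbabilityMeasure μ] [IsProbabilityMeasure ν]
    (hμmom : ∫⁻ x, (ENNReal.ofReal ‖x‖) ^ p ∂μ ≠ ⊤)
    (hνmom : ∫⁻ x, (ENNReal.ofReal ‖x‖) ^ p ∂ν ≠ ⊤) :
    ENNReal.ofReal |(∫ x, (ψ x).toReal ∂μ) - ∫ x, (ψ x).toReal ∂ν|
      ≤ ENNReal.ofReal L * Wp p μ ν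
        + (μ 𝓑) ^ (1 / 2 : ℝ) * eLpNorm (fun x => (ψ x).toReal) 2 μ
        + (ν 𝓑) ^ (1 / 2 : ℝ) * eLpNorm (fun x => (ψ x).toReal) 2 ν
        + ENNReal.ofReal T * (μ 𝓑 + ν 𝓑) :=
  integral_diff_le_of_holder_off_small_set_general ψ hψmeas 𝓑 h𝓑 hHolder μ ν
end
end

section
/- For any probability measures $\mu,\mu',\nu,\nu'$ on ${\rm Mat}_m(\mathbb{R})$ with finite $p$-th moments ($0<p\leq 1$), the convolutions satisfy $W_p(\mu*\nu,\,\mu'*\nu') \leq \max\{\bar\Theta_p(\nu),\bar\Theta_p(\mu')\}\,(W_p(\mu,\mu')+W_p(\nu,\nu'))$, where $\bar\Theta_p(\nu)=\int\|g\|^p\,d\nu(g)$ and $\mu*\nu$ is the pushforward of $\mu\otimes\nu$ under matrix multiplication $(g,g')\mapsto gg'$. -/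
/-!
Insert `μ' * ν` between `μ * ν` and `μ' * ν'`. Against a `p`-Hölder test function `φ`, the first
step compares `μ` with `μ'` on `g ↦ ∫ φ (g g') dν(g')`, the second compares `ν` with `ν'` on
`g' ↦ ∫ φ (g g') dμ'(g)` (Fubini). Since `‖g g' - g₁ g'‖ ≤ ‖g - g₁‖ ‖g'‖` and `t ↦ t ^ p` is
monotone and multiplicative, these averaged functions are `p`-Hölder with constants `Θ̄_p(ν)` and
`Θ̄_p(μ')`, so rescaling them turns each step into a `W_p` bound.
-/

open MeasureTheory ENNReal

noncomputable section

/-- The convolution `μ * ν`: the pushforward of `μ ⊗ ν` under matrix multiplication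
`(g, g') ↦ g g'`. -/
def conv {m : ℕ} (μ ν : Measure (Mat m)) : Measure (Mat m) :=
  Measure.map (fun q : Mat m × Mat m => q.1 * q.2) (μ.prod ν)

/-- The order-`p` Wasserstein distance (`0 < p ≤ 1`), in dual (Kantorovich–Rubinstein) form:
`W_p(μ,ν) = sup { ∫φ d(μ-ν) : φ is p-Hölder with constant ≤ 1 }`. -/
def Wdual {m : ℕ} (p : ℝ) (μ ν : Measure (Mat m)) : ℝ :=
  ⨆ φ : {φ : Mat m → ℝ // ∀ x y, |φ x - φ y| ≤ ‖x - y‖ ^ p},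
    ((∫ g, φ.1 g ∂μ) - ∫ g, φ.1 g ∂ν)

open Filter Topology

lemma norm_mul_rpow_le {R : Type*} [SeminormedRing R] {p : ℝ} (hp : 0 ≤ p) (a b : R) :
    ‖a * b‖ ^ p ≤ ‖a‖ ^ p * ‖b‖ ^ p := by
  rw [← Real.mul_rpow (norm_nonneg _) (norm_nonneg _)]
  exact Real.rpow_le_rpow (norm_nonneg _) (norm_mul_le a b) hp

lemma abs_integral_sub_integral_le {α : Type*} [MeasurableSpace α] {μ : Measure α}
    {f g c : α → ℝ} (hf : Integrable f μ) (hg : Integrable g μ) (hc : Integrable c μ)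
    (h : ∀ a, |f a - g a| ≤ c a) :
    |(∫ a, f a ∂μ) - ∫ a, g a ∂μ| ≤ ∫ a, c a ∂μ := by
  rw [← integral_sub hf hg]
  exact (abs_integral_le_integral_abs).trans
    (integral_mono (hf.sub hg).abs hc h)

section Holder

variable {E : Type*} [SeminormedAddCommGroup E] {p : ℝ} {φ : E → ℝ}

lemma continuous_of_abs_sub_le_rpow (hp : 0 < p) (hφ : ∀ x y, |φ x - φ y| ≤ ‖x - y‖ ^ p) :
    Continuous φ := by
  refine continuous_iff_continuousAt.2 fun y => tendsto_iff_norm_sub_tendsto_zero.2 ?_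
  have h : Tendsto (fun x => ‖x - y‖) (𝓝 y) (𝓝 0) :=
    tendsto_iff_norm_sub_tendsto_zero.1 tendsto_id
  refine squeeze_zero (fun _ => norm_nonneg _) (fun x => hφ x y) ?_
  simpa [Real.zero_rpow hp.ne'] using h.rpow_const (Or.inr hp.le)

lemma Integrable.comp_of_abs_sub_le_rpow [MeasurableSpace E] [OpensMeasurableSpace E]
    {α : Type*} [MeasurableSpace α] {μ : Measure α} [IsFiniteMeasure μ] {f : α → E} {w : α → ℝ}
    (hp : 0 < p) (hφ : ∀ x y, |φ x - φ y| ≤ ‖x - y‖ ^ p) (hf : AEMeasurable f μ)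
    (hw : Integrable w μ) (hfw : ∀ a, ‖f a‖ ^ p ≤ w a) :
    Integrable (fun a => φ (f a)) μ := by
  refine (hw.add (integrable_const |φ 0|)).mono'
    ((continuous_of_abs_sub_le_rpow hp hφ).measurable.comp_aemeasurable hf).aestronglyMeasurable
    (ae_of_all _ fun a => ?_)
  have h := (abs_sub_abs_le_abs_sub (φ (f a)) (φ 0)).trans (hφ (f a) 0)
  rw [sub_zero] at h
  simp only [Real.norm_eq_abs, Pi.add_apply]
  linarith [hfw a]

end Holder

section Averaging

variable {E : Type*} [NormedRing E] [MeasurableSpace E] [BorelSpace E]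
  {p : ℝ} {φ : E → ℝ} {ν : Measure E} [IsFiniteMeasure ν]

lemma integrable_comp_const_mul (hp : 0 < p) (hφ : ∀ x y, |φ x - φ y| ≤ ‖x - y‖ ^ p)
    (hν : Integrable (fun g => ‖g‖ ^ p) ν) (x : E) :
    Integrable (fun g => φ (x * g)) ν :=
  Integrable.comp_of_abs_sub_le_rpow hp hφ (continuous_const_mul x).aemeasurable
    (hν.const_mul _) fun g => norm_mul_rpow_le hp.le x g

lemma integrable_comp_mul_const (hp : 0 < p) (hφ : ∀ x y, |φ x - φ y| ≤ ‖x - y‖ ^ p)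
    (hν : Integrable (fun g => ‖g‖ ^ p) ν) (x : E) :
    Integrable (fun g => φ (g * x)) ν :=
  Integrable.comp_of_abs_sub_le_rpow hp hφ (continuous_mul_const x).aemeasurable
    (hν.mul_const _) fun g => norm_mul_rpow_le hp.le g x

lemma abs_integral_const_mul_sub_le (hp : 0 < p) (hφ : ∀ x y, |φ x - φ y| ≤ ‖x - y‖ ^ p)
    (hν : Integrable (fun g => ‖g‖ ^ p) ν) (x y : E) :
    |(∫ g, φ (x * g) ∂ν) - ∫ g, φ (y * g) ∂ν| ≤ (∫ g, ‖g‖ ^ p ∂ν) * ‖x - y‖ ^ p := by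
  rw [← integral_mul_const]
  refine abs_integral_sub_integral_le (integrable_comp_const_mul hp hφ hν x)
    (integrable_comp_const_mul hp hφ hν y) (hν.mul_const _) fun g => ?_
  calc |φ (x * g) - φ (y * g)| ≤ ‖(x - y) * g‖ ^ p := by rw [sub_mul]; exact hφ _ _
    _ ≤ ‖g‖ ^ p * ‖x - y‖ ^ p := by rw [mul_comm (‖g‖ ^ p)]; exact norm_mul_rpow_le hp.le _ _

lemma abs_integral_mul_const_sub_le (hp : 0 < p) (hφ : ∀ x y, |φ x - φ y| ≤ ‖x - y‖ ^ p)
    (hν : Integrable (fun g => ‖g‖ ^ p) ν) (x y : E) :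
    |(∫ g, φ (g * x) ∂ν) - ∫ g, φ (g * y) ∂ν| ≤ (∫ g, ‖g‖ ^ p ∂ν) * ‖x - y‖ ^ p := by
  rw [← integral_mul_const]
  refine abs_integral_sub_integral_le (integrable_comp_mul_const hp hφ hν x)
    (integrable_comp_mul_const hp hφ hν y) (hν.mul_const _) fun g => ?_
  calc |φ (g * x) - φ (g * y)| ≤ ‖g * (x - y)‖ ^ p := by rw [mul_sub]; exact hφ _ _
    _ ≤ ‖g‖ ^ p * ‖x - y‖ ^ p := norm_mul_rpow_le hp.le _ _

end Averaging

section Convolution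

variable {m : ℕ} {p : ℝ} {φ : Mat m → ℝ} {μ ν : Measure (Mat m)}
  [IsFiniteMeasure μ] [IsFiniteMeasure ν]

lemma integrable_comp_mul_prod (hp : 0 < p) (hφ : ∀ x y, |φ x - φ y| ≤ ‖x - y‖ ^ p)
    (hμ : Integrable (fun g => ‖g‖ ^ p) μ) (hν : Integrable (fun g => ‖g‖ ^ p) ν) :
    Integrable (fun q : Mat m × Mat m => φ (q.1 * q.2)) (μ.prod ν) :=
  Integrable.comp_of_abs_sub_le_rpow hp hφ continuous_mul.aemeasurable
    (hμ.mul_prod hν) fun q => norm_mul_rpow_le hp.le q.1 q.2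

lemma integral_conv (hp : 0 < p) (hφ : ∀ x y, |φ x - φ y| ≤ ‖x - y‖ ^ p)
    (hμ : Integrable (fun g => ‖g‖ ^ p) μ) (hν : Integrable (fun g => ‖g‖ ^ p) ν) :
    ∫ g, φ g ∂(conv μ ν) = ∫ g, ∫ g', φ (g * g') ∂ν ∂μ := by
  rw [conv, integral_map continuous_mul.aemeasurable
    (continuous_of_abs_sub_le_rpow hp hφ).aestronglyMeasurable]
  exact integral_prod _ (integrable_comp_mul_prod hp hφ hμ hν)

lemma integral_conv_eq_integral_swap (hp : 0 < p) (hφ : ∀ x y, |φ x - φ y| ≤ ‖x - y‖ ^ p)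
    (hμ : Integrable (fun g => ‖g‖ ^ p) μ) (hν : Integrable (fun g => ‖g‖ ^ p) ν) :
    ∫ g, φ g ∂(conv μ ν) = ∫ g', ∫ g, φ (g * g') ∂μ ∂ν := by
  rw [integral_conv hp hφ hμ hν]
  exact integral_integral_swap (integrable_comp_mul_prod hp hφ hμ hν)

end Convolution

section Wasserstein

lemma Wdual_le {m : ℕ} {p : ℝ} {μ ν : Measure (Mat m)} {c : ℝ}
    (h : ∀ φ : Mat m → ℝ, (∀ x y, |φ x - φ y| ≤ ‖x - y‖ ^ p) →
      (∫ g, φ g ∂μ) - ∫ g, φ g ∂ν ≤ c) :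
    Wdual p μ ν ≤ c :=
  have : Nonempty {φ : Mat m → ℝ // ∀ x y, |φ x - φ y| ≤ ‖x - y‖ ^ p} :=
    ⟨⟨0, fun x y => by simpa using Real.rpow_nonneg (norm_nonneg (x - y)) p⟩⟩
  ciSup_le fun φ => h φ.1 φ.2

variable {m : ℕ} {p : ℝ} {μ ν : Measure (Mat m)} [IsProbabilityMeasure μ] [IsProbabilityMeasure ν]

lemma abs_integral_sub_apply_zero_le (hp : 0 < p) {φ : Mat m → ℝ}
    (hφ : ∀ x y, |φ x - φ y| ≤ ‖x - y‖ ^ p) (hμ : Integrable (fun g => ‖g‖ ^ p) μ) :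
    |(∫ g, φ g ∂μ) - φ 0| ≤ ∫ g, ‖g‖ ^ p ∂μ := by
  simpa using abs_integral_sub_integral_le (Integrable.comp_of_abs_sub_le_rpow hp hφ
    aemeasurable_id hμ fun _ => le_rfl) (integrable_const (φ 0)) hμ
    fun g => by simpa using hφ g 0

-- `Wdual` is a real `⨆`, which is junk (`0`) unless this range is bounded above.
lemma Wdual_bddAbove (hp : 0 < p) (hμ : Integrable (fun g => ‖g‖ ^ p) μ)
    (hν : Integrable (fun g => ‖g‖ ^ p) ν) :
    BddAbove (Set.range fun φ : {φ : Mat m → ℝ // ∀ x y, |φ x - φ y| ≤ ‖x - y‖ ^ p} =>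
      (∫ g, φ.1 g ∂μ) - ∫ g, φ.1 g ∂ν) := by
  refine ⟨(∫ g, ‖g‖ ^ p ∂μ) + ∫ g, ‖g‖ ^ p ∂ν, ?_⟩
  rintro _ ⟨⟨φ, hφ⟩, rfl⟩
  have hμφ := abs_le.1 (abs_integral_sub_apply_zero_le hp hφ hμ)
  have hνφ := abs_le.1 (abs_integral_sub_apply_zero_le hp hφ hν)
  dsimp only
  linarith [hμφ.2, hνφ.1]

lemma sub_integral_le_Wdual (hp : 0 < p) (hμ : Integrable (fun g => ‖g‖ ^ p) μ)
    (hν : Integrable (fun g => ‖g‖ ^ p) ν) {φ : Mat m → ℝ}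
    (hφ : ∀ x y, |φ x - φ y| ≤ ‖x - y‖ ^ p) :
    (∫ g, φ g ∂μ) - ∫ g, φ g ∂ν ≤ Wdual p μ ν :=
  le_ciSup (Wdual_bddAbove hp hμ hν) ⟨φ, hφ⟩

lemma Wdual_nonneg (hp : 0 < p) (hμ : Integrable (fun g => ‖g‖ ^ p) μ)
    (hν : Integrable (fun g => ‖g‖ ^ p) ν) :
    0 ≤ Wdual p μ ν := by
  simpa using sub_integral_le_Wdual hp hμ hν (φ := fun _ => 0)
    fun x y => by simpa using Real.rpow_nonneg (norm_nonneg (x - y)) p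

lemma sub_integral_le_mul_Wdual (hp : 0 < p) (hμ : Integrable (fun g => ‖g‖ ^ p) μ)
    (hν : Integrable (fun g => ‖g‖ ^ p) ν) {ψ : Mat m → ℝ} {K : ℝ} (hK : 0 ≤ K)
    (hψ : ∀ x y, |ψ x - ψ y| ≤ K * ‖x - y‖ ^ p) :
    (∫ g, ψ g ∂μ) - ∫ g, ψ g ∂ν ≤ K * Wdual p μ ν := by
  rcases hK.eq_or_lt with rfl | hK
  · have hψ0 : ψ = fun _ => ψ 0 :=
      funext fun x => sub_eq_zero.1 (abs_nonpos_iff.1 (by simpa using hψ x 0))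
    rw [hψ0]
    simp
  · have hφ : ∀ x y, |K⁻¹ * ψ x - K⁻¹ * ψ y| ≤ ‖x - y‖ ^ p := fun x y => by
      rw [← mul_sub, abs_mul, abs_of_pos (inv_pos.2 hK), inv_mul_le_iff₀ hK]
      exact hψ x y
    have h := sub_integral_le_Wdual hp hμ hν hφ
    rw [integral_const_mul, integral_const_mul, ← mul_sub, inv_mul_le_iff₀ hK] at h
    exact h

end Wasserstein

theorem Wp_conv_le_general {m : ℕ} {p : ℝ} (hp0 : 0 < p)
    (μ μ' ν ν' : Measure (Mat m))
    [IsProbabilityMeasure μ] [IsProbabilityMeasure μ']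
    [IsProbabilityMeasure ν] [IsProbabilityMeasure ν']
    (hμ : Integrable (fun g => ‖g‖ ^ p) μ) (hμ' : Integrable (fun g => ‖g‖ ^ p) μ')
    (hν : Integrable (fun g => ‖g‖ ^ p) ν) (hν' : Integrable (fun g => ‖g‖ ^ p) ν') :
    Wdual p (conv μ ν) (conv μ' ν')
      ≤ max (∫ g, ‖g‖ ^ p ∂ν) (∫ g, ‖g‖ ^ p ∂μ')
        * (Wdual p μ μ' + Wdual p ν ν') := by
  refine Wdual_le fun φ hφ => ?_
  have hmoment {η : Measure (Mat m)} : 0 ≤ ∫ g, ‖g‖ ^ p ∂η :=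
    integral_nonneg fun g => Real.rpow_nonneg (norm_nonneg g) p
  have hμμ' := sub_integral_le_mul_Wdual hp0 hμ hμ' hmoment
    (abs_integral_const_mul_sub_le hp0 hφ hν)
  have hνν' := sub_integral_le_mul_Wdual hp0 hν hν' hmoment
    (abs_integral_mul_const_sub_le hp0 hφ hμ')
  have hmid := (integral_conv hp0 hφ hμ' hν).symm.trans
    (integral_conv_eq_integral_swap hp0 hφ hμ' hν)
  rw [integral_conv hp0 hφ hμ hν, integral_conv_eq_integral_swap hp0 hφ hμ' hν']
  calc _ ≤ (∫ g, ‖g‖ ^ p ∂ν) * Wdual p μ μ' + (∫ g, ‖g‖ ^ p ∂μ') * Wdual p ν ν' := by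
        linarith
    _ ≤ _ := by
        rw [mul_add]
        gcongr
        exacts [Wdual_nonneg hp0 hμ hμ', le_max_left _ _, Wdual_nonneg hp0 hν hν',
          le_max_right _ _]

/-- the convolution is locally Lipschitz for `W_p`:
`W_p(μ*ν, μ'*ν') ≤ max{Θ̄_p(ν), Θ̄_p(μ')} (W_p(μ,μ') + W_p(ν,ν'))`,
where `Θ̄_p(ν) = ∫ ‖g‖^p dν(g)`. -/
theorem Wp_conv_le {m : ℕ} {p : ℝ} (hp0 : 0 < p) (hp1 : p ≤ 1)
    (μ μ' ν ν' : Measure (Mat m))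
    [IsProbabilityMeasure μ] [IsProbabilityMeasure μ']
    [IsProbabilityMeasure ν] [IsProbabilityMeasure ν']
    (hμ : Integrable (fun g => ‖g‖ ^ p) μ) (hμ' : Integrable (fun g => ‖g‖ ^ p) μ')
    (hν : Integrable (fun g => ‖g‖ ^ p) ν) (hν' : Integrable (fun g => ‖g‖ ^ p) ν') :
    Wdual p (conv μ ν) (conv μ' ν')
      ≤ max (∫ g, ‖g‖ ^ p ∂ν) (∫ g, ‖g‖ ^ p ∂μ')
        * (Wdual p μ μ' + Wdual p ν ν') :=
  Wp_conv_le_general hp0 μ μ' ν ν' hμ hμ' hν hν'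
end
end

section
/- For a probability measure $\mu$ on ${\rm SL}_2(\mathbb{R})$ and $0<\alpha\leq 1/2$, the contraction coefficient equals the moment: $\kappa_\alpha(\mu)=\underline\Theta_{2\alpha}(\mu)$, where $\kappa_\alpha(\mu):=\sup_{\hat v\neq\hat w}\int\left[\frac{d(\hat g\hat v,\hat g\hat w)}{d(\hat v,\hat w)}\right]^\alpha d\mu(g)$ and $\underline\Theta_{2\alpha}(\mu):=\sup_{\|v\|=1}\int\|gv\|^{-2\alpha}\,d\mu(g)$. -/
/-! For `det g = 1` the wedge is preserved, `‖gv ∧ gw‖ = ‖v ∧ w‖`, so the distortion ratio of the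
sine metric is `(‖gv‖ ‖gw‖)⁻¹` and the integrand of `κ_α` is `‖gv‖^{-α} ‖gw‖^{-α}`. Young's
inequality `ab ≤ a²/2 + b²/2` bounds its integral by `Θ̲_{2α}`. Conversely, letting `w` tend to `v`
along a rotation and applying Fatou's lemma recovers `∫ ‖gv‖^{-2α}` from below. -/

open MeasureTheory ENNReal RealInnerProductSpace

noncomputable section

abbrev Mat2 := EuclideanSpace ℝ (Fin 2) →L[ℝ] EuclideanSpace ℝ (Fin 2)

instance : MeasurableSpace Mat2 := borel _
instance : BorelSpace Mat2 := ⟨rfl⟩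

/-- `‖u ∧ w‖`, the norm of the wedge of two vectors of the plane. -/
def wedgeNorm (u w : EuclideanSpace ℝ (Fin 2)) : ℝ :=
  Real.sqrt (‖u‖ ^ 2 * ‖w‖ ^ 2 - ⟪u, w⟫ ^ 2)

/-- The contraction coefficient
`κ_α(μ) = sup_{v̂ ≠ ŵ} ∫ [d(ĝv̂, ĝŵ)/d(v̂,ŵ)]^α dμ(g)` for the sine projective metric
(computed in `ℝ≥0∞`). -/
def kappa (α : ℝ) (μ : Measure Mat2) : ℝ≥0∞ :=
  ⨆ v : EuclideanSpace ℝ (Fin 2), ⨆ w : EuclideanSpace ℝ (Fin 2),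
    ⨆ _ : ‖v‖ = 1 ∧ ‖w‖ = 1 ∧ wedgeNorm v w ≠ 0,
      ∫⁻ g, (ENNReal.ofReal (wedgeNorm (g v) (g w))
          / ENNReal.ofReal (‖g v‖ * ‖g w‖ * wedgeNorm v w)) ^ α ∂μ

/-- The moment `Θ̲_{2α}(μ) = sup_{‖v‖=1} ∫ ‖gv‖^{-2α} dμ(g)` (in `ℝ≥0∞`). -/
def underTheta2 (α : ℝ) (μ : Measure Mat2) : ℝ≥0∞ :=
  ⨆ v : EuclideanSpace ℝ (Fin 2), ⨆ _ : ‖v‖ = 1,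
    ∫⁻ g, (‖g v‖₊ : ℝ≥0∞) ^ (-(2 * α)) ∂μ

open Filter Topology

local notation "ℝ²" => EuclideanSpace ℝ (Fin 2)

lemma det_basisFun_fin_two (u w : ℝ²) :
    (EuclideanSpace.basisFun (Fin 2) ℝ).toBasis.det ![u, w] = u 0 * w 1 - u 1 * w 0 := by
  simp [Module.Basis.det_apply, Matrix.det_fin_two, Module.Basis.toMatrix_apply, mul_comm]

lemma wedgeNorm_eq_abs (u w : ℝ²) : wedgeNorm u w = |u 0 * w 1 - u 1 * w 0| := by
  rw [wedgeNorm, ← Real.sqrt_sq_eq_abs, EuclideanSpace.norm_sq_eq, EuclideanSpace.norm_sq_eq,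
    EuclideanSpace.inner_eq_star_dotProduct]
  simp only [Real.norm_eq_abs, sq_abs, Fin.sum_univ_two, dotProduct, Pi.star_apply, star_trivial]
  congr 1
  ring

lemma wedgeNorm_map (g : Mat2) (u w : ℝ²) :
    wedgeNorm (g u) (g w) = |LinearMap.det (g : ℝ² →ₗ[ℝ] ℝ²)| * wedgeNorm u w := by
  rw [wedgeNorm_eq_abs, wedgeNorm_eq_abs, ← det_basisFun_fin_two, ← det_basisFun_fin_two,
    ← abs_mul, ← Module.Basis.det_comp]
  congr 2
  ext i : 1
  fin_cases i <;> rfl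

@[simp]
lemma wedgeNorm_zero_left (w : ℝ²) : wedgeNorm 0 w = 0 := by simp [wedgeNorm]

@[simp]
lemma wedgeNorm_zero_right (u : ℝ²) : wedgeNorm u 0 = 0 := by simp [wedgeNorm]

lemma wedgeNorm_apply_div {g : Mat2} {v w : ℝ²} (hvw : wedgeNorm v w ≠ 0) :
    wedgeNorm (g v) (g w) / (‖g v‖ * ‖g w‖ * wedgeNorm v w)
      = |LinearMap.det (g : ℝ² →ₗ[ℝ] ℝ²)| / (‖g v‖ * ‖g w‖) := by
  rw [wedgeNorm_map, mul_div_mul_right _ _ hvw]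

lemma distortion_rpow_eq {g : Mat2} (hg : LinearMap.det (g : ℝ² →ₗ[ℝ] ℝ²) = 1) {v w : ℝ²}
    (hvw : wedgeNorm v w ≠ 0) (α : ℝ) :
    (ENNReal.ofReal (wedgeNorm (g v) (g w)) / ENNReal.ofReal (‖g v‖ * ‖g w‖ * wedgeNorm v w)) ^ α
      = (‖g v‖₊ : ℝ≥0∞) ^ (-α) * (‖g w‖₊ : ℝ≥0∞) ^ (-α) := by
  have hgvw : wedgeNorm (g v) (g w) ≠ 0 := by rwa [wedgeNorm_map, hg, abs_one, one_mul]
  have hgv : g v ≠ 0 := by rintro h; simp [h] at hgvw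
  have hgw : g w ≠ 0 := by rintro h; simp [h] at hgvw
  have hW : 0 < wedgeNorm v w := (Real.sqrt_nonneg _).lt_of_ne' hvw
  have hgv_pos := norm_pos_iff.mpr hgv
  have hgw_pos := norm_pos_iff.mpr hgw
  rw [← ENNReal.ofReal_div_of_pos (by positivity), wedgeNorm_apply_div hvw, hg, abs_one, one_div,
    ENNReal.ofReal_inv_of_pos (by positivity), ENNReal.ofReal_mul (norm_nonneg _), ofReal_norm,
    ofReal_norm, enorm_eq_nnnorm, enorm_eq_nnnorm, ENNReal.inv_rpow, ← ENNReal.rpow_neg,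
    ENNReal.mul_rpow_of_ne_top ENNReal.coe_ne_top ENNReal.coe_ne_top]

lemma rpow_neg_rpow_two (x : ℝ≥0∞) (α : ℝ) : (x ^ (-α)) ^ (2 : ℝ) = x ^ (-(2 * α)) := by
  rw [← ENNReal.rpow_mul]
  ring_nf

variable {α : ℝ} {μ : Measure Mat2}

lemma kappa_eq_iSup_lintegral_mul
    (hdet : ∀ᵐ (g : Mat2) ∂μ, LinearMap.det (g : ℝ² →ₗ[ℝ] ℝ²) = 1) :
    kappa α μ = ⨆ (v : ℝ²) (w : ℝ²) (_ : ‖v‖ = 1 ∧ ‖w‖ = 1 ∧ wedgeNorm v w ≠ 0),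
      ∫⁻ g, (‖g v‖₊ : ℝ≥0∞) ^ (-α) * (‖g w‖₊ : ℝ≥0∞) ^ (-α) ∂μ := by
  refine iSup_congr fun v => iSup_congr fun w => iSup_congr fun h => ?_
  exact lintegral_congr_ae (hdet.mono fun g hg => distortion_rpow_eq hg h.2.2 α)

lemma lintegral_le_underTheta2 {v : ℝ²} (hv : ‖v‖ = 1) :
    ∫⁻ g, (‖g v‖₊ : ℝ≥0∞) ^ (-(2 * α)) ∂μ ≤ underTheta2 α μ :=
  le_iSup₂_of_le v hv le_rfl

lemma lintegral_rpow_neg_mul_le_underTheta2 {v w : ℝ²} (hv : ‖v‖ = 1) (hw : ‖w‖ = 1) :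
    ∫⁻ g, (‖g v‖₊ : ℝ≥0∞) ^ (-α) * (‖g w‖₊ : ℝ≥0∞) ^ (-α) ∂μ ≤ underTheta2 α μ := by
  have young (g : Mat2) := ENNReal.young_inequality ((‖g v‖₊ : ℝ≥0∞) ^ (-α))
    ((‖g w‖₊ : ℝ≥0∞) ^ (-α)) Real.HolderConjugate.two_two
  simp only [rpow_neg_rpow_two, ENNReal.ofReal_ofNat] at young
  calc _ ≤ ∫⁻ g, (‖g v‖₊ : ℝ≥0∞) ^ (-(2 * α)) / 2 + (‖g w‖₊ : ℝ≥0∞) ^ (-(2 * α)) / 2 ∂μ :=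
        lintegral_mono young
    _ = (∫⁻ g, (‖g v‖₊ : ℝ≥0∞) ^ (-(2 * α)) ∂μ) / 2
          + (∫⁻ g, (‖g w‖₊ : ℝ≥0∞) ^ (-(2 * α)) ∂μ) / 2 := by
        simp only [div_eq_mul_inv]
        rw [lintegral_add_left (by fun_prop), lintegral_mul_const' _ _ (by simp),
          lintegral_mul_const' _ _ (by simp)]
    _ ≤ underTheta2 α μ / 2 + underTheta2 α μ / 2 := by
        gcongr <;> exact lintegral_le_underTheta2 ‹_›
    _ = underTheta2 α μ := ENNReal.add_halves _

def rotate (t : ℝ) (v : ℝ²) : ℝ² := Real.cos t • v + Real.sin t • !₂[-v 1, v 0]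

lemma continuous_rotate (v : ℝ²) : Continuous fun t => rotate t v := by
  unfold rotate
  fun_prop

@[simp]
lemma rotate_zero (v : ℝ²) : rotate 0 v = v := by simp [rotate]

lemma norm_rotate (t : ℝ) (v : ℝ²) : ‖rotate t v‖ = ‖v‖ := by
  rw [← sq_eq_sq₀ (norm_nonneg _) (norm_nonneg _), EuclideanSpace.norm_sq_eq,
    EuclideanSpace.norm_sq_eq]
  simp only [rotate, PiLp.add_apply, PiLp.smul_apply, smul_eq_mul, Real.norm_eq_abs, sq_abs,
    Fin.sum_univ_two, Matrix.cons_val_zero, Matrix.cons_val_one, Matrix.cons_val_fin_one]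
  linear_combination (v 0 ^ 2 + v 1 ^ 2) * Real.cos_sq_add_sin_sq t

lemma wedgeNorm_rotate (t : ℝ) (v : ℝ²) : wedgeNorm v (rotate t v) = |Real.sin t| * ‖v‖ ^ 2 := by
  have h : v 0 * rotate t v 1 - v 1 * rotate t v 0 = Real.sin t * ‖v‖ ^ 2 := by
    simp only [rotate, PiLp.add_apply, PiLp.smul_apply, smul_eq_mul, Matrix.cons_val_one,
      Matrix.cons_val_fin_one, Matrix.cons_val_zero, EuclideanSpace.norm_sq_eq, Real.norm_eq_abs,
      sq_abs, Fin.sum_univ_two]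
    ring
  rw [wedgeNorm_eq_abs, h, abs_mul, abs_of_nonneg (sq_nonneg ‖v‖)]

lemma exists_seq_tendsto_wedgeNorm_ne_zero {v : ℝ²} (hv : ‖v‖ = 1) :
    ∃ w : ℕ → ℝ², (∀ n, ‖w n‖ = 1 ∧ wedgeNorm v (w n) ≠ 0) ∧ Tendsto w atTop (𝓝 v) := by
  refine mem_closure_iff_seq_limit.mp (mem_closure_of_tendsto (f := fun t => rotate t v)
    (b := 𝓝[>] 0) (s := {w | ‖w‖ = 1 ∧ wedgeNorm v w ≠ 0}) ?_ ?_)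
  · simpa using ((continuous_rotate v).tendsto 0).mono_left nhdsWithin_le_nhds
  · filter_upwards [Ioo_mem_nhdsGT Real.pi_pos] with t ht
    simp [norm_rotate, wedgeNorm_rotate, hv, (Real.sin_pos_of_pos_of_lt_pi ht.1 ht.2).ne']

lemma tendsto_nnnorm_rpow_neg_mul {E : Type*} [SeminormedAddCommGroup E] {x : ℕ → E} {y : E}
    (hx : Tendsto x atTop (𝓝 y)) (α : ℝ) :
    Tendsto (fun n => (‖y‖₊ : ℝ≥0∞) ^ (-α) * (‖x n‖₊ : ℝ≥0∞) ^ (-α)) atTop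
      (𝓝 ((‖y‖₊ : ℝ≥0∞) ^ (-(2 * α)))) := by
  have hcont : Continuous fun z : E => (‖z‖₊ : ℝ≥0∞) ^ (-α) := by fun_prop
  rw [← rpow_neg_rpow_two, ENNReal.rpow_two, sq]
  refine ENNReal.Tendsto.const_mul ((hcont.tendsto y).comp hx) ?_
  rcases eq_or_ne ((‖y‖₊ : ℝ≥0∞) ^ (-α)) 0 with h | h <;> simp [h]

lemma kappa_le_underTheta2 (hdet : ∀ᵐ (g : Mat2) ∂μ, LinearMap.det (g : ℝ² →ₗ[ℝ] ℝ²) = 1) :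
    kappa α μ ≤ underTheta2 α μ := by
  rw [kappa_eq_iSup_lintegral_mul hdet]
  exact iSup₂_le fun v w => iSup_le fun h => lintegral_rpow_neg_mul_le_underTheta2 h.1 h.2.1

lemma underTheta2_le_kappa (hdet : ∀ᵐ (g : Mat2) ∂μ, LinearMap.det (g : ℝ² →ₗ[ℝ] ℝ²) = 1) :
    underTheta2 α μ ≤ kappa α μ := by
  rw [kappa_eq_iSup_lintegral_mul hdet]
  refine iSup₂_le fun v hv => ?_
  obtain ⟨w, hw, hwv⟩ := exists_seq_tendsto_wedgeNorm_ne_zero hv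
  calc ∫⁻ g, (‖g v‖₊ : ℝ≥0∞) ^ (-(2 * α)) ∂μ
      = ∫⁻ g, liminf (fun n => (‖g v‖₊ : ℝ≥0∞) ^ (-α) * (‖g (w n)‖₊ : ℝ≥0∞) ^ (-α)) atTop ∂μ :=
        lintegral_congr fun g =>
          (tendsto_nnnorm_rpow_neg_mul ((g.continuous.tendsto v).comp hwv) α).liminf_eq.symm
    _ ≤ liminf (fun n => ∫⁻ g, (‖g v‖₊ : ℝ≥0∞) ^ (-α) * (‖g (w n)‖₊ : ℝ≥0∞) ^ (-α) ∂μ) atTop :=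
        lintegral_liminf_le fun n => by fun_prop
    _ ≤ _ := liminf_le_of_frequently_le' <| Frequently.of_forall fun n =>
        le_iSup₂_of_le v (w n) <| le_iSup_of_le (f := fun _ => _) ⟨hv, hw n⟩ le_rfl

theorem kappa_eq_underTheta_general {α : ℝ} (μ : Measure Mat2)
    (hdet : ∀ᵐ (g : Mat2) ∂μ, LinearMap.det (g : EuclideanSpace ℝ (Fin 2) →ₗ[ℝ] EuclideanSpace ℝ (Fin 2)) = 1) :
    kappa α μ = underTheta2 α μ :=
  le_antisymm (kappa_le_underTheta2 hdet) (underTheta2_le_kappa hdet)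

/-- for a probability measure `μ` on `SL₂(ℝ)` and `0 < α ≤ 1/2`,
the contraction coefficient equals the moment: `κ_α(μ) = Θ̲_{2α}(μ)`. -/
theorem kappa_eq_underTheta {α : ℝ} (hα0 : 0 < α) (hα1 : α ≤ 1 / 2)
    (μ : Measure Mat2) [IsProbabilityMeasure μ]
    (hdet : ∀ᵐ (g : Mat2) ∂μ, LinearMap.det (g : EuclideanSpace ℝ (Fin 2) →ₗ[ℝ] EuclideanSpace ℝ (Fin 2)) = 1) :
    kappa α μ = underTheta2 α μ :=
  kappa_eq_underTheta_general μ hdet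
end
end

section
/- Let $a\in\mathbb{R}$, $E\neq a$, $0<\beta$, and consider $g_0(\beta)=\begin{bmatrix} a-E & -\beta\\ \beta & 0\end{bmatrix}$. Then there is a constant $K=K(a,E)$ such that for all $m\geq 1$ and all sufficiently small $\beta>0$: $\|g_0(\beta)^m-g_0(0)^m\|\leq K\, m\,|a-E|^m\,\beta$. -/
open MeasureTheory

noncomputable section

/-- The matrix `g₀(β) = [[a-E, -β], [β, 0]]`, as a continuous linear operator on
Euclidean `ℝ²` (so that the operator norm and powers are available). -/
def g0 (a E β : ℝ) : EuclideanSpace ℝ (Fin 2) →L[ℝ] EuclideanSpace ℝ (Fin 2) :=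
  Matrix.toEuclideanCLM (𝕜 := ℝ) !![a - E, -β; β, 0]

namespace G0Aux

/-- The recurrence sequence `F 0 = 0`, `F 1 = 1`, `F (n+2) = r F (n+1) - b² F n`. -/
def F (r b : ℝ) : ℕ → ℝ
  | 0 => 0
  | 1 => 1
  | (n + 2) => r * F r b (n + 1) - b ^ 2 * F r b n

lemma F_zero (r b : ℝ) : F r b 0 = 0 := rfl
lemma F_one (r b : ℝ) : F r b 1 = 1 := rfl
lemma F_add_two (r b : ℝ) (n : ℕ) :
    F r b (n + 2) = r * F r b (n + 1) - b ^ 2 * F r b n := rfl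

lemma matrix_pow (r b : ℝ) (n : ℕ) :
    (!![r, -b; b, 0] : Matrix (Fin 2) (Fin 2) ℝ) ^ (n + 1) =
      !![F r b (n + 2), -b * F r b (n + 1); b * F r b (n + 1), -b ^ 2 * F r b n] := by
  induction n with
  | zero =>
    rw [pow_one, F_add_two, F_one, F_zero]
    norm_num
  | succ n ih =>
    rw [pow_succ, ih, Matrix.mul_fin_two]
    rw [F_add_two r b (n + 1), F_add_two r b n]
    congr 1 <;> ring

lemma F_closed (r b s : ℝ) (hs : s ^ 2 = r ^ 2 - 4 * b ^ 2) (n : ℕ) :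
    F r b n * s = ((r + s) / 2) ^ n - ((r - s) / 2) ^ n := by
  induction n using Nat.twoStepInduction with
  | zero => simp [F_zero]
  | one => simp [F_one]; ring
  | more n ih1 ih2 =>
    rw [F_add_two, sub_mul, mul_assoc, mul_assoc, ih1, ih2]
    have hp : ((r + s) / 2) ^ 2 = r * ((r + s) / 2) - b ^ 2 := by
      field_simp; linarith [hs]
    have hq : ((r - s) / 2) ^ 2 = r * ((r - s) / 2) - b ^ 2 := by
      field_simp; linarith [hs]
    linear_combination ((r + s) / 2) ^ n * hp - ((r - s) / 2) ^ n * hq - (((r + s) / 2) ^ n - ((r - s) / 2) ^ n) / 2 * hs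

lemma geom_aux (ρ : ℝ) (hρ : 0 ≤ ρ) (x y : ℝ) (hx : |x| ≤ ρ) (hy : |y| ≤ ρ / 8) (n : ℕ) :
    |∑ i ∈ Finset.range n, x ^ i * y ^ (n - 1 - i)| ≤ 2 * ρ ^ (n - 1) := by
  calc |∑ i ∈ Finset.range n, x ^ i * y ^ (n - 1 - i)|
      ≤ ∑ i ∈ Finset.range n, |x ^ i * y ^ (n - 1 - i)| := Finset.abs_sum_le_sum_abs _ _
    _ ≤ ∑ i ∈ Finset.range n, ρ ^ (n - 1) * (1 / 8 : ℝ) ^ (n - 1 - i) := by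
        apply Finset.sum_le_sum
        intro i hi
        rw [Finset.mem_range] at hi
        rw [abs_mul, abs_pow, abs_pow]
        have h1 : |x| ^ i * |y| ^ (n - 1 - i) ≤ ρ ^ i * (ρ / 8) ^ (n - 1 - i) := by
          apply mul_le_mul (pow_le_pow_left₀ (abs_nonneg x) hx i)
            (pow_le_pow_left₀ (abs_nonneg y) hy _) (by positivity) (by positivity)
        refine h1.trans (le_of_eq ?_)
        have : (ρ / 8 : ℝ) ^ (n - 1 - i) = ρ ^ (n - 1 - i) * (1 / 8 : ℝ) ^ (n - 1 - i) := by
          rw [← mul_pow]; ring_nf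
        rw [this, ← mul_assoc, ← pow_add]
        congr 2
        omega
    _ = ρ ^ (n - 1) * ∑ i ∈ Finset.range n, (1 / 8 : ℝ) ^ (n - 1 - i) := by
        rw [Finset.mul_sum]
    _ ≤ ρ ^ (n - 1) * 2 := by
        apply mul_le_mul_of_nonneg_left _ (by positivity)
        have hre : ∑ i ∈ Finset.range n, (1 / 8 : ℝ) ^ (n - 1 - i) =
            ∑ i ∈ Finset.range n, (1 / 8 : ℝ) ^ i := by
          rw [← Finset.sum_range_reflect]
          refine Finset.sum_congr rfl fun j hj => ?_
          rw [Finset.mem_range] at hj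
          congr 1
          omega
        rw [hre, geom_sum_eq (by norm_num : (1 / 8 : ℝ) ≠ 1)]
        have : (0:ℝ) ≤ (1/8:ℝ)^n := by positivity
        have h1 : (1/8:ℝ)^n ≤ 1 := pow_le_one₀ (by norm_num) (by norm_num)
        rw [div_le_iff_of_neg (by norm_num : (1/8:ℝ) - 1 < 0)]
        nlinarith
    _ = 2 * ρ ^ (n - 1) := by ring

end G0Aux

namespace G0Aux2

lemma opnorm_le (M : Matrix (Fin 2) (Fin 2) ℝ) :
    ‖Matrix.toEuclideanCLM (𝕜 := ℝ) M‖ ≤ |M 0 0| + |M 0 1| + |M 1 0| + |M 1 1| := by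
  apply ContinuousLinearMap.opNorm_le_bound _ (by positivity)
  intro x
  set y := Matrix.toEuclideanCLM (𝕜 := ℝ) M x with hy
  have hcoord : ∀ i, y i = M i 0 * x 0 + M i 1 * x 1 := by
    intro i
    have : y i = (M.mulVec fun j => x j) i := rfl
    rw [this, Matrix.mulVec, dotProduct, Fin.sum_univ_two]
  have hxnorm : ∀ j, |x j| ≤ ‖x‖ := by
    intro j
    rw [EuclideanSpace.norm_eq]
    refine le_trans ?_ (Real.sqrt_le_sqrt (Finset.single_le_sum
      (f := fun i => ‖x i‖ ^ 2) (fun i _ => by positivity) (Finset.mem_univ j)))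
    simp only [Real.norm_eq_abs, sq_abs, Real.sqrt_sq_eq_abs, abs_abs, le_refl]
  have hynorm : ‖y‖ ≤ |y 0| + |y 1| := by
    rw [EuclideanSpace.norm_eq, Fin.sum_univ_two]
    have h2 : ‖y 0‖ ^ 2 + ‖y 1‖ ^ 2 ≤ (|y 0| + |y 1|) ^ 2 := by
      simp only [Real.norm_eq_abs]
      nlinarith [abs_nonneg (y 0), abs_nonneg (y 1)]
    calc Real.sqrt (‖y 0‖ ^ 2 + ‖y 1‖ ^ 2) ≤ Real.sqrt ((|y 0| + |y 1|) ^ 2) :=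
          Real.sqrt_le_sqrt h2
      _ = |y 0| + |y 1| := by
          rw [Real.sqrt_sq (by positivity)]
  calc ‖y‖ ≤ |y 0| + |y 1| := hynorm
    _ ≤ (|M 0 0| * ‖x‖ + |M 0 1| * ‖x‖) + (|M 1 0| * ‖x‖ + |M 1 1| * ‖x‖) := by
        gcongr <;> rw [hcoord] <;>
          refine (abs_add_le _ _).trans ?_ <;> rw [abs_mul, abs_mul] <;> gcongr <;>
          first
          | exact hxnorm 0
          | exact hxnorm 1
    _ = (|M 0 0| + |M 0 1| + |M 1 0| + |M 1 1|) * ‖x‖ := by ring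

end G0Aux2

namespace G0Aux3
open G0Aux
lemma F_abs_le (r b : ℝ) (hb : 0 < b) (hb' : b ≤ |r| / 4) (n : ℕ) :
    |F r b n| * |r| ≤ 2 * |r| ^ n := by
  set ρ := |r| with hρdef
  have hρ : 0 < ρ := lt_of_lt_of_le hb (by linarith [abs_nonneg r, hb'])
  have hρ4 : 0 < ρ := hρ
  have hnn : (0:ℝ) ≤ r ^ 2 - 4 * b ^ 2 := by
    have : b ^ 2 ≤ (ρ/4) ^ 2 := pow_le_pow_left₀ hb.le hb' 2
    have hr2 : r ^ 2 = ρ ^ 2 := (sq_abs r).symm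
    nlinarith
  set s := Real.sqrt (r ^ 2 - 4 * b ^ 2) with hsdef
  have hs0 : 0 ≤ s := Real.sqrt_nonneg _
  have hs2 : s ^ 2 = r ^ 2 - 4 * b ^ 2 := Real.sq_sqrt hnn
  have hsρ : s ≤ ρ := by
    have : s ^ 2 ≤ ρ ^ 2 := by rw [hs2, ← sq_abs r]; nlinarith
    nlinarith
  have hrρ : |r| = ρ := rfl
  have habs_r : -ρ ≤ r ∧ r ≤ ρ := abs_le.mp (le_of_eq hrρ)
  set p := (r + s) / 2 with hpdef
  set q := (r - s) / 2 with hqdef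
  have hpq : p * q = b ^ 2 := by
    have : p * q = (r ^ 2 - s ^ 2) / 4 := by rw [hpdef, hqdef]; ring
    rw [this, hs2]; ring
  have hpabs : |p| ≤ ρ := by
    rw [abs_le]; constructor <;> [skip; skip] <;> rw [hpdef] <;> cases habs_r <;> linarith
  have hqabs : |q| ≤ ρ := by
    rw [abs_le]; constructor <;> rw [hqdef] <;> [skip; skip] <;> cases habs_r <;> linarith
  have hprod : |p| * |q| ≤ ρ ^ 2 / 16 := by
    rw [← abs_mul, hpq, abs_of_nonneg (by positivity)]
    have : b ^ 2 ≤ (ρ/4)^2 := pow_le_pow_left₀ hb.le hb' 2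
    nlinarith
  have hsum : ρ ≤ |p| + |q| := by
    calc ρ = |r| := rfl
      _ = |p + q| := by congr 1; rw [hpdef, hqdef]; ring
      _ ≤ |p| + |q| := abs_add_le _ _
  -- one of |p|, |q| is ≤ ρ/8
  have hsne : s ≠ 0 := by
    intro h
    rw [h] at hs2
    have : b ^ 2 ≤ (ρ/4)^2 := pow_le_pow_left₀ hb.le hb' 2
    have hr2 : r ^ 2 = ρ ^ 2 := (sq_abs r).symm
    nlinarith
  have key : |F r b n| ≤ 2 * ρ ^ (n - 1) := by
    have hgs := geom_sum₂_mul p q n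
    have hFs := F_closed r b s hs2 n
    have hFeq : F r b n = ∑ i ∈ Finset.range n, p ^ i * q ^ (n - 1 - i) := by
      have hpq' : p - q = s := by rw [hpdef, hqdef]; ring
      rw [hpq'] at hgs
      have : F r b n * s = (∑ i ∈ Finset.range n, p ^ i * q ^ (n - 1 - i)) * s := by
        rw [hgs, hFs]
      exact mul_right_cancel₀ hsne this
    rcases le_or_gt (|q|) (ρ/8) with hsmall | hbig
    · rw [hFeq]; exact geom_aux ρ hρ.le p q hpabs hsmall n
    · have hpsmall : |p| ≤ ρ/8 := by nlinarith [abs_nonneg p, abs_nonneg q]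
      have hswap : (∑ i ∈ Finset.range n, p ^ i * q ^ (n - 1 - i)) =
          ∑ i ∈ Finset.range n, q ^ i * p ^ (n - 1 - i) := by
        rw [← Finset.sum_range_reflect]
        refine Finset.sum_congr rfl fun j hj => ?_
        rw [Finset.mem_range] at hj
        have : n - 1 - (n - 1 - j) = j := by omega
        rw [this, mul_comm]
      rw [hFeq, hswap]
      exact geom_aux ρ hρ.le q p hqabs hpsmall n
  cases n with
  | zero => rw [F_zero]; simp
  | succ k =>
    have : ρ ^ (k + 1 - 1) * ρ = ρ ^ (k+1) := by
      rw [Nat.add_sub_cancel, ← pow_succ]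
    calc |F r b (k+1)| * |r| ≤ (2 * ρ ^ (k + 1 - 1)) * ρ :=
          mul_le_mul_of_nonneg_right key (abs_nonneg r)
      _ = 2 * ρ ^ (k+1) := by rw [mul_assoc, this]

end G0Aux3

namespace G0Aux4
open G0Aux G0Aux3
lemma F_b0 (r : ℝ) (k : ℕ) : F r 0 (k + 1) = r ^ k := by
  induction k with
  | zero => exact F_one r 0
  | succ k ih => rw [F_add_two, ih]; ring

lemma F_sub_pow (r b : ℝ) (hb : 0 < b) (hb' : b ≤ |r| / 4) (n : ℕ) :
    |F r b (n + 1) - r ^ n| * r ^ 2 ≤ 2 * n * b ^ 2 * |r| ^ n := by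
  induction n with
  | zero => rw [F_one]; norm_num
  | succ k ih =>
    have hid : F r b (k + 2) - r ^ (k + 1) = r * (F r b (k + 1) - r ^ k) - b ^ 2 * F r b k := by
      rw [F_add_two]; ring
    have habs : |F r b (k + 2) - r ^ (k + 1)| ≤
        |r| * |F r b (k + 1) - r ^ k| + b ^ 2 * |F r b k| := by
      rw [hid]
      refine (abs_sub _ _).trans ?_
      rw [abs_mul, abs_mul, abs_pow, sq_abs]
    have hFk := F_abs_le r b hb hb' k
    have hρ : 0 < |r| := lt_of_lt_of_le hb (by linarith [abs_nonneg r, hb'])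
    have hr2 : r ^ 2 = |r| ^ 2 := (sq_abs r).symm
    have h1 : |F r b (k + 2) - r ^ (k + 1)| * r ^ 2 ≤
        |r| * (|F r b (k + 1) - r ^ k| * r ^ 2) + b ^ 2 * (|F r b k| * |r|) * |r| := by
      rw [hr2]
      nlinarith [abs_nonneg (F r b (k + 2) - r ^ (k + 1)), abs_nonneg (F r b (k+1) - r^k),
        abs_nonneg (F r b k), sq_nonneg b]
    calc |F r b (k + 2) - r ^ (k + 1)| * r ^ 2
        ≤ |r| * (|F r b (k + 1) - r ^ k| * r ^ 2) + b ^ 2 * (|F r b k| * |r|) * |r| := h1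
      _ ≤ |r| * (2 * k * b ^ 2 * |r| ^ k) + b ^ 2 * (2 * |r| ^ k) * |r| := by
          gcongr
      _ = 2 * ((k + 1 : ℕ) : ℝ) * b ^ 2 * |r| ^ (k + 1) := by rw [pow_succ]; push_cast; ring

end G0Aux4

set_option maxHeartbeats 1000000 in
/-- for `E ≠ a` there is a constant `K = K(a,E)` such that for all `m ≥ 1`
and all sufficiently small `β > 0`:
`‖g₀(β)^m - g₀(0)^m‖ ≤ K m |a-E|^m β`. -/

theorem g0_pow_perturbation (a E : ℝ) (hE : E ≠ a) :
    ∃ K : ℝ, ∃ β₀ > (0:ℝ), ∀ m : ℕ, 1 ≤ m → ∀ β : ℝ, 0 < β → β ≤ β₀ →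
      ‖(g0 a E β) ^ m - (g0 a E 0) ^ m‖ ≤ K * m * |a - E| ^ m * β := by
  set r := a - E with hrdef
  have hr : r ≠ 0 := sub_ne_zero_of_ne (Ne.symm hE)
  have hρ : (0:ℝ) < |r| := abs_pos.mpr hr
  refine ⟨5 / |r|, |r| / 4, by positivity, ?_⟩
  intro m hm β hβ hβ'
  obtain ⟨n, rfl⟩ : ∃ n, m = n + 1 := ⟨m - 1, by omega⟩
  -- operator difference as a single matrix
  have hA : (g0 a E β) ^ (n + 1) =
      Matrix.toEuclideanCLM (𝕜 := ℝ) ((!![r, -β; β, 0] : Matrix (Fin 2) (Fin 2) ℝ) ^ (n + 1)) :=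
    (map_pow _ _ _).symm
  have hB : (g0 a E 0) ^ (n + 1) =
      Matrix.toEuclideanCLM (𝕜 := ℝ)
        ((!![r, -(0:ℝ); (0:ℝ), 0] : Matrix (Fin 2) (Fin 2) ℝ) ^ (n + 1)) :=
    (map_pow _ _ _).symm
  have hdiff : (g0 a E β) ^ (n + 1) - (g0 a E 0) ^ (n + 1) =
      Matrix.toEuclideanCLM (𝕜 := ℝ)
        ((!![r, -β; β, 0] : Matrix (Fin 2) (Fin 2) ℝ) ^ (n + 1) -
          (!![r, -(0:ℝ); (0:ℝ), 0] : Matrix (Fin 2) (Fin 2) ℝ) ^ (n + 1)) := by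
    rw [map_sub, hA, hB]
  rw [hdiff, G0Aux.matrix_pow r β n, G0Aux.matrix_pow r 0 n]
  set D := (!![G0Aux.F r β (n + 2), -β * G0Aux.F r β (n + 1);
        β * G0Aux.F r β (n + 1), -β ^ 2 * G0Aux.F r β n] -
      !![G0Aux.F r 0 (n + 2), -0 * G0Aux.F r 0 (n + 1);
        0 * G0Aux.F r 0 (n + 1), -0 ^ 2 * G0Aux.F r 0 n] :
      Matrix (Fin 2) (Fin 2) ℝ) with hD
  have hD00 : D 0 0 = G0Aux.F r β (n + 2) - r ^ (n + 1) := by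
    rw [hD, Matrix.sub_apply, G0Aux4.F_b0 r (n + 1)]
    simp
  have hD01 : D 0 1 = -β * G0Aux.F r β (n + 1) := by
    rw [hD, Matrix.sub_apply]; simp
  have hD10 : D 1 0 = β * G0Aux.F r β (n + 1) := by
    rw [hD, Matrix.sub_apply]; simp
  have hD11 : D 1 1 = -β ^ 2 * G0Aux.F r β n := by
    rw [hD, Matrix.sub_apply]; simp
  refine (G0Aux2.opnorm_le D).trans ?_
  rw [hD00, hD01, hD10, hD11]
  have h0 := G0Aux4.F_sub_pow r β hβ hβ' (n + 1)
  have h1 := G0Aux3.F_abs_le r β hβ hβ' (n + 1)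
  have h2 := G0Aux3.F_abs_le r β hβ hβ' n
  have hr2 : r ^ 2 = |r| ^ 2 := (sq_abs r).symm
  have hpn : (0:ℝ) ≤ |r| ^ n := by positivity
  have hps : |r| ^ (n + 1) = |r| ^ n * |r| := pow_succ _ _
  -- individual entry bounds
  have e0 : |G0Aux.F r β (n + 2) - r ^ (n + 1)| * |r| ≤ ((n:ℝ) + 1) * β * |r| ^ (n + 1) / 2 := by
    rw [hr2] at h0
    push_cast at h0
    nlinarith [abs_nonneg (G0Aux.F r β (n + 2) - r ^ (n + 1)), hβ.le, hβ',
      mul_le_mul_of_nonneg_right hβ' (mul_nonneg hβ.le (mul_nonneg (by positivity : (0:ℝ) ≤ (n:ℝ)+1) (by positivity : (0:ℝ) ≤ |r| ^ (n+1))))]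
  have e1 : |(-β * G0Aux.F r β (n + 1))| * |r| ≤ 2 * β * |r| ^ (n + 1) := by
    rw [abs_mul, abs_neg, abs_of_pos hβ]
    nlinarith [abs_nonneg (G0Aux.F r β (n + 1))]
  have e2 : |(-β ^ 2 * G0Aux.F r β n)| * |r| ≤ β * |r| ^ (n + 1) / 2 := by
    rw [abs_mul, abs_neg, abs_pow, abs_of_pos hβ, mul_assoc]
    calc β ^ 2 * (|G0Aux.F r β n| * |r|) ≤ β ^ 2 * (2 * |r| ^ n) :=
          mul_le_mul_of_nonneg_left h2 (by positivity)
      _ ≤ β * |r| ^ (n + 1) / 2 := by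
          rw [hps]
          nlinarith [mul_le_mul_of_nonneg_right hβ' (mul_nonneg hβ.le (by positivity) : (0:ℝ) ≤ β * |r| ^ n)]
  have hsum : (|G0Aux.F r β (n + 2) - r ^ (n + 1)| + |(-β * G0Aux.F r β (n + 1))| +
      |β * G0Aux.F r β (n + 1)| + |(-β ^ 2 * G0Aux.F r β n)|) * |r| ≤
      5 * ((n:ℝ) + 1) * β * |r| ^ (n + 1) := by
    have e1' : |β * G0Aux.F r β (n + 1)| * |r| ≤ 2 * β * |r| ^ (n + 1) := by
      rw [abs_mul, abs_of_pos hβ]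
      nlinarith [abs_nonneg (G0Aux.F r β (n + 1))]
    have hn1 : (1:ℝ) ≤ (n:ℝ) + 1 := by have := Nat.cast_nonneg (α := ℝ) n; linarith
    have hb2 : (0:ℝ) ≤ β * |r| ^ (n + 1) := mul_nonneg hβ.le (by positivity)
    have hmono : β * |r| ^ (n + 1) ≤ ((n:ℝ) + 1) * (β * |r| ^ (n + 1)) :=
      le_mul_of_one_le_left hb2 hn1
    have expand : (|G0Aux.F r β (n + 2) - r ^ (n + 1)| + |(-β * G0Aux.F r β (n + 1))| +
        |β * G0Aux.F r β (n + 1)| + |(-β ^ 2 * G0Aux.F r β n)|) * |r| =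
        |G0Aux.F r β (n + 2) - r ^ (n + 1)| * |r| + |(-β * G0Aux.F r β (n + 1))| * |r| +
        |β * G0Aux.F r β (n + 1)| * |r| + |(-β ^ 2 * G0Aux.F r β n)| * |r| := by ring
    rw [expand]
    nlinarith [e0, e1, e1', e2, hmono]
  rw [div_mul_eq_mul_div, div_mul_eq_mul_div, div_mul_eq_mul_div, le_div_iff₀ hρ]
  push_cast
  calc (|G0Aux.F r β (n + 2) - r ^ (n + 1)| + |(-β * G0Aux.F r β (n + 1))| +
      |β * G0Aux.F r β (n + 1)| + |(-β ^ 2 * G0Aux.F r β n)|) * |r|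
      ≤ 5 * ((n:ℝ) + 1) * β * |r| ^ (n + 1) := hsum
    _ = 5 * ((n:ℝ) + 1) * |r| ^ (n + 1) * β := by ring
end
end
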